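/- arXiv:1710.07708 — 2 statements merged into one kernel-verified Lean document; each statement's English description precedes it below -/
import Mathlib

section
/- Let $Q$ be the rotation of $\mathbb{R}^2$ by $2\pi/3$. The space of totally symmetric 3-tensors $A \in (\mathbb{R}^2)^{\otimes 3}$ satisfying $Q^{\otimes 3}A = A$ is two-dimensional, spanned by $E_{111} - 3\,\mathrm{sym}\,E_{122}$ and $E_{222} - 3\,\mathrm{sym}\,E_{112}$, where $E_{ijk} = e_i\otimes e_j\otimes e_k$. -/
open Finset Matrix

noncomputable def Qtri : Matrix (Fin 2) (Fin 2) ℝ :=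
  !![-(1/2 : ℝ), -(Real.sqrt 3 / 2); Real.sqrt 3 / 2, -(1/2 : ℝ)]

noncomputable def tpow3 (B : Matrix (Fin 2) (Fin 2) ℝ)
    (A : (Fin 3 → Fin 2) → ℝ) : (Fin 3 → Fin 2) → ℝ :=
  fun l => ∑ k : Fin 3 → Fin 2, A k * ∏ i, B (l i) (k i)

noncomputable def sym3 (A : (Fin 3 → Fin 2) → ℝ) : (Fin 3 → Fin 2) → ℝ :=
  fun l => ((Nat.factorial 3 : ℝ))⁻¹ * ∑ φ : Equiv.Perm (Fin 3), A (l ∘ φ)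

def E3 (i j k : Fin 2) : (Fin 3 → Fin 2) → ℝ :=
  fun l => if l 0 = i ∧ l 1 = j ∧ l 2 = k then 1 else 0

noncomputable def T1 : (Fin 3 → Fin 2) → ℝ := E3 0 0 0 - (3 : ℝ) • sym3 (E3 0 1 1)

noncomputable def T2 : (Fin 3 → Fin 2) → ℝ := E3 1 1 1 - (3 : ℝ) • sym3 (E3 0 0 1)

/-!
Every index triple is a permutation of one of `000, 001, 011, 111`, so a symmetric tensor is
determined by these four entries, and `Q^{⊗3}` maps symmetric tensors to symmetric ones. Hence
`Q^{⊗3}A = A` is four scalar equations in the four sorted entries of `A`. The equations at `000`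
and `111` force `A₀₁₁ = -A₀₀₀` and `A₀₀₁ = -A₁₁₁`, and conversely these two relations imply all four
equations (using `√3 ^ 2 = 3`). The tensors satisfying them are exactly `A₀₀₀ • T1 + A₁₁₁ • T2`.
-/

lemma sym3_apply_comp (A : (Fin 3 → Fin 2) → ℝ) (σ : Equiv.Perm (Fin 3)) (l : Fin 3 → Fin 2) :
    sym3 A (l ∘ σ) = sym3 A l := by
  unfold sym3
  congr 1
  exact Equiv.sum_comp (Equiv.mulLeft σ) (fun φ => A (l ∘ φ))

lemma sym3_eq_self_iff {A : (Fin 3 → Fin 2) → ℝ} :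
    sym3 A = A ↔ ∀ (σ : Equiv.Perm (Fin 3)) l, A (l ∘ σ) = A l := by
  refine ⟨fun h σ l => by rw [← h, sym3_apply_comp], fun h => funext fun l => ?_⟩
  simp [sym3, h, Fintype.card_perm, Nat.factorial]

lemma sym3_sym3 (A : (Fin 3 → Fin 2) → ℝ) : sym3 (sym3 A) = sym3 A :=
  sym3_eq_self_iff.2 (sym3_apply_comp A)

lemma sym3_add (X Y : (Fin 3 → Fin 2) → ℝ) : sym3 (X + Y) = sym3 X + sym3 Y := by
  ext l; simp [sym3, sum_add_distrib, mul_add]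

lemma sym3_sub (X Y : (Fin 3 → Fin 2) → ℝ) : sym3 (X - Y) = sym3 X - sym3 Y := by
  ext l; simp [sym3, sum_sub_distrib, mul_sub]

lemma sym3_smul (c : ℝ) (X : (Fin 3 → Fin 2) → ℝ) : sym3 (c • X) = c • sym3 X := by
  ext l; simp only [sym3, Pi.smul_apply, smul_eq_mul, ← mul_sum]; ring

lemma exists_perm_comp_eq_sorted (l : Fin 3 → Fin 2) : ∃ σ : Equiv.Perm (Fin 3),
    l ∘ σ = ![0, 0, 0] ∨ l ∘ σ = ![0, 0, 1] ∨ l ∘ σ = ![0, 1, 1] ∨ l ∘ σ = ![1, 1, 1] := by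
  revert l; decide

lemma ext_of_sym3_eq_self {X Y : (Fin 3 → Fin 2) → ℝ} (hX : sym3 X = X) (hY : sym3 Y = Y)
    (h000 : X ![0, 0, 0] = Y ![0, 0, 0]) (h001 : X ![0, 0, 1] = Y ![0, 0, 1])
    (h011 : X ![0, 1, 1] = Y ![0, 1, 1]) (h111 : X ![1, 1, 1] = Y ![1, 1, 1]) : X = Y := by
  funext l
  obtain ⟨σ, h | h | h | h⟩ := exists_perm_comp_eq_sorted l <;>
    rw [← sym3_eq_self_iff.1 hX σ, ← sym3_eq_self_iff.1 hY σ, h] <;> assumption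

lemma E3_apply (i j k : Fin 2) (l : Fin 3 → Fin 2) :
    E3 i j k l = if l = ![i, j, k] then 1 else 0 := by
  simp [E3, funext_iff, Fin.forall_fin_succ]

lemma sym3_E3_diag (i : Fin 2) : sym3 (E3 i i i) = E3 i i i := by
  refine sym3_eq_self_iff.2 fun σ l => ?_
  have hconst (m : Fin 3 → Fin 2) : m = ![i, i, i] ↔ ∀ j, m j = i := by
    simp [funext_iff, Fin.forall_fin_succ]
  simp only [E3_apply, hconst, Function.comp_apply,
    σ.forall_congr_right (q := fun j => l j = i)]

lemma sym3_E3_apply_of_card_eq {i j k : Fin 2} {l : Fin 3 → Fin 2} {n : ℕ}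
    (h : #{φ : Equiv.Perm (Fin 3) | l ∘ φ = ![i, j, k]} = n) :
    sym3 (E3 i j k) l = n / 6 := by
  simp [sym3, E3_apply, sum_boole, h, Nat.factorial, div_eq_inv_mul]

section TensorCube

variable (B : Matrix (Fin 2) (Fin 2) ℝ) {A : (Fin 3 → Fin 2) → ℝ}

lemma tpow3_apply_comp (hA : sym3 A = A) (σ : Equiv.Perm (Fin 3)) (l : Fin 3 → Fin 2) :
    tpow3 B A (l ∘ σ) = tpow3 B A l := by
  unfold tpow3
  refine Fintype.sum_equiv (Equiv.arrowCongr σ (Equiv.refl _)) _ _ fun k => ?_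
  change _ = A (k ∘ σ.symm) * ∏ i, B (l i) (k (σ.symm i))
  rw [sym3_eq_self_iff.1 hA, ← Equiv.prod_comp σ (fun i => B (l i) (k (σ.symm i)))]
  simp

lemma sym3_tpow3 (hA : sym3 A = A) : sym3 (tpow3 B A) = tpow3 B A :=
  sym3_eq_self_iff.2 (tpow3_apply_comp B hA)

lemma sum_fin3_fin2 (f : (Fin 3 → Fin 2) → ℝ) :
    ∑ k, f k = f ![0, 0, 0] + f ![0, 0, 1] + f ![0, 1, 0] + f ![0, 1, 1] +
      f ![1, 0, 0] + f ![1, 0, 1] + f ![1, 1, 0] + f ![1, 1, 1] := by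
  rw [show (univ : Finset (Fin 3 → Fin 2)) =
      {![0, 0, 0], ![0, 0, 1], ![0, 1, 0], ![0, 1, 1], ![1, 0, 0], ![1, 0, 1], ![1, 1, 0],
        ![1, 1, 1]} by decide]
  simp [sum_insert, add_assoc]

lemma tpow3_apply_of_sym3_eq_self (hA : sym3 A = A) (l : Fin 3 → Fin 2) :
    tpow3 B A l =
      A ![0, 0, 0] * (B (l 0) 0 * B (l 1) 0 * B (l 2) 0) +
      A ![0, 0, 1] * (B (l 0) 0 * B (l 1) 0 * B (l 2) 1 + B (l 0) 0 * B (l 1) 1 * B (l 2) 0 +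
        B (l 0) 1 * B (l 1) 0 * B (l 2) 0) +
      A ![0, 1, 1] * (B (l 0) 0 * B (l 1) 1 * B (l 2) 1 + B (l 0) 1 * B (l 1) 0 * B (l 2) 1 +
        B (l 0) 1 * B (l 1) 1 * B (l 2) 0) +
      A ![1, 1, 1] * (B (l 0) 1 * B (l 1) 1 * B (l 2) 1) := by
  have hperm (σ : Equiv.Perm (Fin 3)) (k k' : Fin 3 → Fin 2) (h : k ∘ σ = k') : A k' = A k :=
    h ▸ sym3_eq_self_iff.1 hA σ k
  rw [tpow3, sum_fin3_fin2, hperm (Equiv.swap 1 2) ![0, 0, 1] ![0, 1, 0] (by decide),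
    hperm (Equiv.swap 0 2) ![0, 0, 1] ![1, 0, 0] (by decide),
    hperm (Equiv.swap 0 1) ![0, 1, 1] ![1, 0, 1] (by decide),
    hperm (Equiv.swap 0 2) ![0, 1, 1] ![1, 1, 0] (by decide)]
  simp only [Fin.prod_univ_three, cons_val_zero, cons_val_one, Matrix.cons_val]
  ring

end TensorCube

@[simp] lemma T1_apply_000 : T1 ![0, 0, 0] = 1 := by
  rw [T1, Pi.sub_apply, Pi.smul_apply, sym3_E3_apply_of_card_eq (n := 0) (by decide)]
  norm_num [E3_apply]

@[simp] lemma T1_apply_001 : T1 ![0, 0, 1] = 0 := by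
  rw [T1, Pi.sub_apply, Pi.smul_apply, sym3_E3_apply_of_card_eq (n := 0) (by decide)]
  norm_num [E3_apply]

@[simp] lemma T1_apply_011 : T1 ![0, 1, 1] = -1 := by
  rw [T1, Pi.sub_apply, Pi.smul_apply, sym3_E3_apply_of_card_eq (n := 2) (by decide)]
  norm_num [E3_apply]

@[simp] lemma T1_apply_111 : T1 ![1, 1, 1] = 0 := by
  rw [T1, Pi.sub_apply, Pi.smul_apply, sym3_E3_apply_of_card_eq (n := 0) (by decide)]
  norm_num [E3_apply]

@[simp] lemma T2_apply_000 : T2 ![0, 0, 0] = 0 := by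
  rw [T2, Pi.sub_apply, Pi.smul_apply, sym3_E3_apply_of_card_eq (n := 0) (by decide)]
  norm_num [E3_apply]

@[simp] lemma T2_apply_001 : T2 ![0, 0, 1] = -1 := by
  rw [T2, Pi.sub_apply, Pi.smul_apply, sym3_E3_apply_of_card_eq (n := 2) (by decide)]
  norm_num [E3_apply]

@[simp] lemma T2_apply_011 : T2 ![0, 1, 1] = 0 := by
  rw [T2, Pi.sub_apply, Pi.smul_apply, sym3_E3_apply_of_card_eq (n := 0) (by decide)]
  norm_num [E3_apply]

@[simp] lemma T2_apply_111 : T2 ![1, 1, 1] = 1 := by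
  rw [T2, Pi.sub_apply, Pi.smul_apply, sym3_E3_apply_of_card_eq (n := 0) (by decide)]
  norm_num [E3_apply]

lemma sym3_T1 : sym3 T1 = T1 := by
  rw [T1, sym3_sub, sym3_smul, sym3_E3_diag, sym3_sym3]

lemma sym3_T2 : sym3 T2 = T2 := by
  rw [T2, sym3_sub, sym3_smul, sym3_E3_diag, sym3_sym3]

lemma sym3_smul_T1_add_smul_T2 (c d : ℝ) : sym3 (c • T1 + d • T2) = c • T1 + d • T2 := by
  rw [sym3_add, sym3_smul, sym3_smul, sym3_T1, sym3_T2]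

lemma tpow3_Qtri_eq_self_iff {A : (Fin 3 → Fin 2) → ℝ} (hA : sym3 A = A) :
    tpow3 Qtri A = A ↔ A ![0, 1, 1] = -A ![0, 0, 0] ∧ A ![0, 0, 1] = -A ![1, 1, 1] := by
  have hs : √3 ^ 2 = 3 := Real.sq_sqrt (by norm_num)
  constructor
  · intro hQ
    have h000 := congrFun hQ ![0, 0, 0]
    have h111 := congrFun hQ ![1, 1, 1]
    rw [tpow3_apply_of_sym3_eq_self _ hA] at h000 h111
    simp only [Qtri, of_apply, cons_val', cons_val_fin_one, cons_val_zero, cons_val_one,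
      Matrix.cons_val] at h000 h111
    -- a nonsingular linear system in `A 000 + A 011` and `A 001 + A 111`
    exact ⟨by grind, by grind⟩
  · rintro ⟨h011, h001⟩
    apply ext_of_sym3_eq_self (sym3_tpow3 Qtri hA) hA <;>
      rw [tpow3_apply_of_sym3_eq_self _ hA] <;>
      simp only [Qtri, of_apply, cons_val', cons_val_fin_one, cons_val_zero, cons_val_one,
        Matrix.cons_val, h011, h001] <;>
      grind

lemma eq_smul_T1_add_smul_T2 {A : (Fin 3 → Fin 2) → ℝ} (hA : sym3 A = A)
    (h011 : A ![0, 1, 1] = -A ![0, 0, 0]) (h001 : A ![0, 0, 1] = -A ![1, 1, 1]) :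
    A = A ![0, 0, 0] • T1 + A ![1, 1, 1] • T2 := by
  apply ext_of_sym3_eq_self hA (sym3_smul_T1_add_smul_T2 _ _) <;> simp [h011, h001]

lemma linearIndependent_T1_T2 : LinearIndependent ℝ ![T1, T2] := by
  refine LinearIndependent.pair_iff.2 fun s t h => ⟨?_, ?_⟩
  · simpa using congrFun h ![0, 0, 0]
  · simpa using congrFun h ![1, 1, 1]

theorem stmt2 :
    {A : (Fin 3 → Fin 2) → ℝ | tpow3 Qtri A = A ∧ sym3 A = A}
      = (Submodule.span ℝ {T1, T2} : Submodule ℝ ((Fin 3 → Fin 2) → ℝ)) ∧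
    LinearIndependent ℝ ![T1, T2] := by
  refine ⟨Set.ext fun A => ⟨fun ⟨hQ, hS⟩ => ?_, fun hA => ?_⟩, linearIndependent_T1_T2⟩
  · obtain ⟨h011, h001⟩ := (tpow3_Qtri_eq_self_iff hS).1 hQ
    exact Submodule.mem_span_pair.2 ⟨_, _, (eq_smul_T1_add_smul_T2 hS h011 h001).symm⟩
  · obtain ⟨c, d, rfl⟩ := Submodule.mem_span_pair.1 hA
    have hS := sym3_smul_T1_add_smul_T2 c d
    exact ⟨(tpow3_Qtri_eq_self_iff hS).2 ⟨by simp, by simp⟩, hS⟩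
end

section
/- Let $\ensuremath{\mathcal{R}} \subset \mathbb{R}^2\setminus\{0\}$ be finite with $Q\ensuremath{\mathcal{R}} = \ensuremath{\mathcal{R}}$ for $Q$ a rotation by $2\pi/3$ or $\pi/2$, and let $H \in \mathbb{R}^{\ensuremath{\mathcal{R}}\times\ensuremath{\mathcal{R}}}$ be symmetric with $H_{\rho\sigma} = H_{Q\rho\, Q\sigma}$ for all $\rho,\sigma$. Then the matrix $M = \sum_{\rho,\sigma\in\ensuremath{\mathcal{R}}} H_{\rho\sigma}\,\rho\otimes\sigma$ is a scalar multiple of the identity: $M = \big(\frac{1}{2}\sum_{\rho,\sigma} H_{\rho\sigma}\,\rho\cdot\sigma\big)\mathrm{Id}$. -/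
open Finset Matrix

def Qquad : Matrix (Fin 2) (Fin 2) ℝ := !![0, -1; 1, 0]

/-!
Reindexing both sums along `ρ ↦ Qρ` shows that `M = ∑ H ρ σ • ρ ⊗ σ` satisfies `Q M Qᵀ = M`,
and `M` is symmetric because `H` is. A rotation by `θ` acts on the traceless part of a symmetric
`2 × 2` matrix, i.e. on `(M₀₀ - M₁₁, 2 M₀₁)`, as the rotation by `2θ`, which has no nonzero fixed
vector unless `θ ∈ πℤ`. So `M` is a multiple of the identity, and the multiple is `tr M / 2`.
-/

theorem Finset.sum_comp_eq_of_image_eq {ι M : Type*} [DecidableEq ι] [AddCommMonoid M]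
    {s : Finset ι} {f : ι → ι} (hf : s.image f = s) (g : ι → M) :
    ∑ x ∈ s, g (f x) = ∑ x ∈ s, g x := by
  have hinj : Set.InjOn f s := Finset.card_image_iff.mp (by rw [hf])
  conv_rhs => rw [← hf]
  exact (Finset.sum_image hinj).symm

namespace Matrix

section

variable {l m n α : Type*} [CommSemiring α]

theorem mul_vecMulVec_mul_transpose [Fintype m] (A : Matrix l m α) (B : Matrix n m α)
    (x y : m → α) : A * vecMulVec x y * Bᵀ = vecMulVec (A *ᵥ x) (B *ᵥ y) := by
  rw [mul_vecMulVec, vecMulVec_mul, vecMul_transpose]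

variable [Fintype n]

theorem trace_sum_sum_smul_vecMulVec (R : Finset (n → α)) (H : (n → α) → (n → α) → α) :
    trace (∑ ρ ∈ R, ∑ σ ∈ R, H ρ σ • vecMulVec ρ σ)
      = ∑ ρ ∈ R, ∑ σ ∈ R, H ρ σ * (ρ ⬝ᵥ σ) := by
  simp only [trace_sum, trace_smul, trace_vecMulVec, smul_eq_mul]

omit [Fintype n] in
theorem isSymm_sum_sum_smul_vecMulVec (R : Finset (n → α)) {H : (n → α) → (n → α) → α}
    (hH : ∀ ρ σ, H ρ σ = H σ ρ) : (∑ ρ ∈ R, ∑ σ ∈ R, H ρ σ • vecMulVec ρ σ).IsSymm := by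
  simp only [IsSymm, transpose_sum, transpose_smul, transpose_vecMulVec]
  rw [Finset.sum_comm]
  simp only [hH]

theorem conj_sum_sum_smul_vecMulVec [DecidableEq (n → α)] {Q : Matrix n n α}
    {R : Finset (n → α)} (hR : R.image Q.mulVec = R) {H : (n → α) → (n → α) → α}
    (hH : ∀ ρ σ, H ρ σ = H (Q *ᵥ ρ) (Q *ᵥ σ)) :
    Q * (∑ ρ ∈ R, ∑ σ ∈ R, H ρ σ • vecMulVec ρ σ) * Qᵀ
      = ∑ ρ ∈ R, ∑ σ ∈ R, H ρ σ • vecMulVec ρ σ := by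
  simp only [Matrix.mul_sum, Matrix.sum_mul, Matrix.mul_smul, Matrix.smul_mul,
    mul_vecMulVec_mul_transpose]
  conv_rhs => rw [← Finset.sum_comp_eq_of_image_eq hR]
  refine Finset.sum_congr rfl fun ρ _ => ?_
  conv_rhs => rw [← Finset.sum_comp_eq_of_image_eq hR]
  simp only [← hH]

end

def rotation {K : Type*} [Ring K] (c s : K) : Matrix (Fin 2) (Fin 2) K := !![c, -s; s, c]

theorem eq_smul_one_of_rotation_conj_eq {K : Type*} [Field K] [NeZero (2 : K)] {c s : K}
    (hcs : c ^ 2 + s ^ 2 = 1) (hs : s ≠ 0) {M : Matrix (Fin 2) (Fin 2) K} (hM : M.IsSymm)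
    (hconj : rotation c s * M * (rotation c s)ᵀ = M) :
    M = ((1 / 2 : K) * trace M) • 1 := by
  have hb : M 1 0 = M 0 1 := hM.apply 0 1
  have h00 : (c * M 0 0 - s * M 0 1) * c - (c * M 0 1 - s * M 1 1) * s = M 0 0 := by
    simpa [rotation, mul_apply, vecMul, dotProduct, hb, sub_eq_add_neg]
      using congrFun (congrFun hconj 0) 0
  have h01 : (c * M 0 0 - s * M 0 1) * s + (c * M 0 1 - s * M 1 1) * c = M 0 1 := by
    simpa [rotation, mul_apply, vecMul, dotProduct, hb, sub_eq_add_neg]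
      using congrFun (congrFun hconj 0) 1
  have e1 : s * (M 0 0 - M 1 1) + 2 * c * M 0 1 = 0 := by
    apply mul_left_cancel₀ hs
    linear_combination (-1) * h00 + M 0 0 * hcs
  have e2 : c * (M 0 0 - M 1 1) - 2 * s * M 0 1 = 0 := by
    apply mul_left_cancel₀ hs
    linear_combination h01 - M 0 1 * hcs
  have hdiag : M 0 0 = M 1 1 := by
    linear_combination s * e1 + c * e2 - (M 0 0 - M 1 1) * hcs
  have hoff : M 0 1 = 0 := by
    have h2 : 2 * M 0 1 = 0 := by
      linear_combination c * e1 - s * e2 - 2 * M 0 1 * hcs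
    simpa [two_ne_zero] using h2
  ext i j
  fin_cases i <;> fin_cases j <;>
    simp [trace, Fin.sum_univ_two, hdiag, hoff, hb, ← two_mul,
      inv_mul_cancel_left₀ (two_ne_zero : (2 : K) ≠ 0)]

end Matrix

theorem stmt5_general (Q : Matrix (Fin 2) (Fin 2) ℝ) (hQ : Q = Qtri ∨ Q = Qquad)
    (R : Finset (Fin 2 → ℝ))
    (hQR : R.image Q.mulVec = R)
    (H : (Fin 2 → ℝ) → (Fin 2 → ℝ) → ℝ)
    (hHsym : ∀ ρ σ, H ρ σ = H σ ρ)
    (hHrot : ∀ ρ σ, H ρ σ = H (Q.mulVec ρ) (Q.mulVec σ)) :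
    ∑ ρ ∈ R, ∑ σ ∈ R, H ρ σ • Matrix.vecMulVec ρ σ
      = ((1/2 : ℝ) * ∑ ρ ∈ R, ∑ σ ∈ R, H ρ σ * (ρ ⬝ᵥ σ)) •
          (1 : Matrix (Fin 2) (Fin 2) ℝ) := by
  obtain ⟨c, s, rfl, hcs, hs⟩ : ∃ c s : ℝ, Q = rotation c s ∧ c ^ 2 + s ^ 2 = 1 ∧ s ≠ 0 := by
    rcases hQ with rfl | rfl
    · exact ⟨-(1 / 2), √3 / 2, rfl, by norm_num [div_pow], by positivity⟩
    · exact ⟨0, 1, rfl, by norm_num, one_ne_zero⟩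
  rw [← trace_sum_sum_smul_vecMulVec]
  exact eq_smul_one_of_rotation_conj_eq hcs hs (isSymm_sum_sum_smul_vecMulVec R hHsym)
    (conj_sum_sum_smul_vecMulVec hQR hHrot)

theorem stmt5 (Q : Matrix (Fin 2) (Fin 2) ℝ) (hQ : Q = Qtri ∨ Q = Qquad)
    (R : Finset (Fin 2 → ℝ)) (h0 : (0 : Fin 2 → ℝ) ∉ R)
    (hQR : R.image Q.mulVec = R)
    (H : (Fin 2 → ℝ) → (Fin 2 → ℝ) → ℝ)
    (hHsym : ∀ ρ σ, H ρ σ = H σ ρ)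
    (hHrot : ∀ ρ σ, H ρ σ = H (Q.mulVec ρ) (Q.mulVec σ)) :
    ∑ ρ ∈ R, ∑ σ ∈ R, H ρ σ • Matrix.vecMulVec ρ σ
      = ((1/2 : ℝ) * ∑ ρ ∈ R, ∑ σ ∈ R, H ρ σ * (ρ ⬝ᵥ σ)) •
          (1 : Matrix (Fin 2) (Fin 2) ℝ) :=
  stmt5_general Q hQ R hQR H hHsym hHrot
end
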